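/- Let G be a simple connected graph with n nodes and m edges. The additive degree-Kirchhoff index of the q-subdivision graph satisfies K̄(S_q(G)) = 4K̄(G) + 4q K̃(G) + mq(3mq - 2n + 1) - n(n-1). -/

import Mathlib

open Finset

variable {V : Type*}

/-- Normalized adjacency matrix `P = D^{-1/2} A D^{-1/2}`. -/
noncomputable def normAdj [Fintype V] (G : SimpleGraph V) [DecidableRel G.Adj] :
    Matrix V V ℝ :=
  Matrix.of fun i j =>
    if G.Adj i j then 1 / Real.sqrt ((G.degree i : ℝ) * (G.degree j : ℝ)) else 0

lemma normAdj_isHermitian [Fintype V] (G : SimpleGraph V) [DecidableRel G.Adj] :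
    (normAdj G).IsHermitian := by
  ext i j
  simp only [Matrix.conjTranspose_apply, normAdj, Matrix.of_apply, star_trivial]
  by_cases h : G.Adj i j
  · rw [if_pos h, if_pos ((G.adj_comm i j).mp h), mul_comm]
  · rw [if_neg h, if_neg (fun h' => h ((G.adj_comm j i).mp h'))]

/-- `μ` is an eigenvalue of `M`. -/
def IsEigenvalue {W : Type*} [Fintype W] (M : Matrix W W ℝ) (μ : ℝ) : Prop :=
  ∃ v : W → ℝ, v ≠ 0 ∧ M.mulVec v = μ • v

/-- Multiplicity of `μ` as an eigenvalue of `M` (dimension of the eigenspace). -/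
noncomputable def eigMult {W : Type*} [Fintype W] [DecidableEq W]
    (M : Matrix W W ℝ) (μ : ℝ) : ℕ :=
  Module.finrank ℝ (LinearMap.ker (Matrix.toLin' (M - μ • (1 : Matrix W W ℝ))))

/-- `r` is the effective-resistance function of `G`: `r i j = φ i - φ j` where
`L φ = e_i - e_j`. -/
def IsEffRes [Fintype V] [DecidableEq V] (G : SimpleGraph V) [DecidableRel G.Adj]
    (r : V → V → ℝ) : Prop :=
  ∀ i j : V, ∃ φ : V → ℝ,
    (G.lapMatrix ℝ).mulVec φ =
      (fun k => (if k = i then (1 : ℝ) else 0) - (if k = j then (1 : ℝ) else 0)) ∧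
    r i j = φ i - φ j

/-- `T` is the expected-hitting-time function of the simple random walk on `G`. -/
def IsHitting [Fintype V] (G : SimpleGraph V) [DecidableRel G.Adj] (T : V → V → ℝ) : Prop :=
  (∀ j, T j j = 0) ∧
  ∀ i j : V, i ≠ j → T i j = 1 + (∑ k ∈ G.neighborFinset i, T k j) / (G.degree i : ℝ)

/-- Kemeny constant `∑_{λ eigenvalue ≠ 1} 1/(1-λ)` of the random walk on `G`. -/
noncomputable def kemeny [Fintype V] [DecidableEq V] (G : SimpleGraph V) [DecidableRel G.Adj]
    (hP : (normAdj G).IsHermitian) : ℝ :=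
  ∑ i, if hP.eigenvalues i = 1 then 0 else 1 / (1 - hP.eigenvalues i)

/-- Kirchhoff index. -/
noncomputable def kirchhoff [Fintype V] (r : V → V → ℝ) : ℝ :=
  (∑ i, ∑ j, r i j) / 2

/-- Additive degree-Kirchhoff index. -/
noncomputable def addKirchhoff [Fintype V] (G : SimpleGraph V) [DecidableRel G.Adj]
    (r : V → V → ℝ) : ℝ :=
  (∑ i, ∑ j, ((G.degree i : ℝ) + (G.degree j : ℝ)) * r i j) / 2

/-- Multiplicative degree-Kirchhoff index. -/
noncomputable def mulKirchhoff [Fintype V] (G : SimpleGraph V) [DecidableRel G.Adj]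
    (r : V → V → ℝ) : ℝ :=
  (∑ i, ∑ j, (G.degree i : ℝ) * (G.degree j : ℝ) * r i j) / 2

/-- The adjacency relation of the q-subdivision graph. -/
def qSubAdj (G : SimpleGraph V) (q : ℕ) :
    (V ⊕ (G.edgeSet × Fin q)) → (V ⊕ (G.edgeSet × Fin q)) → Prop
  | Sum.inl u, Sum.inr p => u ∈ (p.1 : Sym2 V)
  | Sum.inr p, Sum.inl u => u ∈ (p.1 : Sym2 V)
  | _, _ => False

/-- The q-subdivision graph `S_q(G)`: every edge `uv` of `G` is replaced by `q`
disjoint paths of length 2. -/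
def qSubdivision (G : SimpleGraph V) (q : ℕ) :
    SimpleGraph (V ⊕ (G.edgeSet × Fin q)) where
  Adj := qSubAdj G q
  symm := by
    constructor
    intro a b h
    cases a <;> cases b <;> simp_all [qSubAdj]
  loopless := by
    constructor
    intro a h
    cases a <;> simp_all [qSubAdj]

noncomputable instance (G : SimpleGraph V) (q : ℕ) :
    DecidableRel (qSubdivision G q).Adj := Classical.decRel _

noncomputable instance [Fintype V] (G : SimpleGraph V) : Fintype G.edgeSet :=
  Fintype.ofFinite _

/-!
Write `R = (r i j)`, `B = qIncMatrix G q` for the incidence matrix of `G` with every column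
repeated `q` times, `S = qShadow G q` for the matrix whose row at a vertex of `S_q(G)` is the
probability vector on `V` it lies over (the vertex itself, or the two ends of its edge with
weight `1/2` each), and `C = qHalfIndicator G q` for the diagonal matrix with `1/2` at the
subdivision vertices. Since `B Bᵀ = q (D + A)`, the Laplacian `L'` of `S_q(G)` satisfies
`L' S = (q/2) L` on `V` and `0` elsewhere, so a potential `ψ` of `G` with `L ψ = Sᵀ w` lifts to
the potential `(2/q) S ψ + C w` of `S_q(G)` for the current `w`. With the energy identity
`η ⬝ ψ = -(ηᵀ R η)/2` (for `L ψ = η`, `∑ η = 0`) this gives `r' x y = M x x + M y y - M x y - M y x`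
for `M = qKernel G q r = C - q⁻¹ S R Sᵀ`. The additive index of such a resistance is a
combination of `d' ⬝ diag M`, `trace M` and `d' ⬝ M 1 + 1 ⬝ M d'`: the first two reduce to
`trace (Bᵀ R B) = q trace (R (D + A))`, which Foster's theorem `∑_{ij ∈ E} r i j = n - 1`
evaluates, and the last to `Sᵀ d' = 2q d` and `Sᵀ 1 = 1 + (q/2) d`.
-/
open Finset Matrix SimpleGraph

lemma single_sub_single_dotProduct_mulVec {n : Type*} [Fintype n] [DecidableEq n]
    (M : Matrix n n ℝ) (x y : n) :
    (Pi.single x 1 - Pi.single y 1) ⬝ᵥ M *ᵥ (Pi.single x 1 - Pi.single y 1) =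
      M x x + M y y - M x y - M y x := by
  simp [sub_dotProduct, dotProduct_sub, mulVec_sub]
  ring

lemma dotProduct_mul_mul_transpose_mulVec {m n : Type*} [Fintype m] [Fintype n]
    (S : Matrix m n ℝ) (R : Matrix n n ℝ) (u v : m → ℝ) :
    u ⬝ᵥ (S * R * Sᵀ) *ᵥ v = (Sᵀ *ᵥ u) ⬝ᵥ R *ᵥ (Sᵀ *ᵥ v) := by
  rw [← mulVec_mulVec, ← mulVec_mulVec, dotProduct_mulVec, ← mulVec_transpose]

section EffectiveResistance

variable [Fintype V] [DecidableEq V] {G : SimpleGraph V} [DecidableRel G.Adj] {r : V → V → ℝ}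

lemma lapMatrix_mulVec_apply_eq_sum_adjMatrix (v : V → ℝ) (i : V) :
    (G.lapMatrix ℝ *ᵥ v) i = ∑ j, G.adjMatrix ℝ i j * (v i - v j) := by
  simp only [lapMatrix_mulVec_apply, G.degree_eq_sum_if_adj (R := ℝ), adjMatrix_apply, sum_mul,
    neighborFinset_eq_filter, sum_filter, ← sum_sub_distrib]
  refine sum_congr rfl fun j _ => ?_
  split_ifs <;> ring

lemma SimpleGraph.Connected.sub_eq_sub_of_lapMatrix_mulVec_eq (hG : G.Connected) {φ ψ : V → ℝ}
    (h : G.lapMatrix ℝ *ᵥ φ = G.lapMatrix ℝ *ᵥ ψ) (i j : V) : φ i - φ j = ψ i - ψ j := by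
  have := (lapMatrix_mulVec_eq_zero_iff_forall_reachable G (x := φ - ψ)).1
    (by rw [mulVec_sub, h, sub_self]) i j (hG.preconnected i j)
  simp only [Pi.sub_apply] at this
  linarith

namespace IsEffRes

variable (hr : IsEffRes G r)
include hr

lemma apply_self (i : V) : r i i = 0 := by
  obtain ⟨φ, -, h⟩ := hr i i
  rw [h, sub_self]

lemma eq_sub_of_lapMatrix_mulVec_eq (hG : G.Connected) {φ : V → ℝ} {i j : V}
    (h : G.lapMatrix ℝ *ᵥ φ = Pi.single i 1 - Pi.single j 1) : r i j = φ i - φ j := by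
  obtain ⟨ψ, hψ, hrij⟩ := hr i j
  rw [hrij]
  refine hG.sub_eq_sub_of_lapMatrix_mulVec_eq (hψ.trans ?_) i j
  rw [h]
  ext k
  simp [Pi.single_apply]

lemma exists_grounded (o : V) :
    ∃ φ : V → V → ℝ, ∀ j, G.lapMatrix ℝ *ᵥ φ j = Pi.single j 1 - Pi.single o 1 := by
  choose φ hφ using fun j => hr j o
  refine ⟨φ, fun j => (hφ j).1.trans ?_⟩
  ext k
  simp [Pi.single_apply]

end IsEffRes

end EffectiveResistance

section Grounded

variable [Fintype V] [DecidableEq V] {G : SimpleGraph V} [DecidableRel G.Adj] {r : V → V → ℝ}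
  {o : V} {φ : V → V → ℝ} (hφ : ∀ j, G.lapMatrix ℝ *ᵥ φ j = Pi.single j 1 - Pi.single o 1)
include hφ

lemma lapMatrix_mulVec_sum_smul_grounded {η : V → ℝ} (hη : ∑ i, η i = 0) :
    G.lapMatrix ℝ *ᵥ ∑ j, η j • φ j = η := by
  ext k
  simp [mulVec_sum, mulVec_smul, hφ, Pi.single_apply, mul_sub, sum_sub_distrib, hη]

lemma IsEffRes.eq_grounded (hr : IsEffRes G r) (hG : G.Connected) (i j : V) :
    r i j = φ i i - φ j i - (φ i j - φ j j) :=
  hr.eq_sub_of_lapMatrix_mulVec_eq hG (φ := φ i - φ j) (i := i) (j := j)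
    (by rw [mulVec_sub, hφ i, hφ j]; abel)

end Grounded

namespace IsEffRes

variable [Fintype V] [DecidableEq V] {G : SimpleGraph V} [DecidableRel G.Adj] {r : V → V → ℝ}
  (hr : IsEffRes G r) (hG : G.Connected)
include hr hG

lemma exists_lapMatrix_mulVec_eq {η : V → ℝ} (hη : ∑ i, η i = 0) :
    ∃ ψ, G.lapMatrix ℝ *ᵥ ψ = η := by
  obtain ⟨o⟩ := hG.nonempty
  obtain ⟨φ, hφ⟩ := hr.exists_grounded o
  exact ⟨_, lapMatrix_mulVec_sum_smul_grounded hφ hη⟩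

theorem dotProduct_eq_of_lapMatrix_mulVec_eq {η ψ : V → ℝ} (hη : ∑ i, η i = 0)
    (hψ : G.lapMatrix ℝ *ᵥ ψ = η) : η ⬝ᵥ ψ = -(η ⬝ᵥ of r *ᵥ η) / 2 := by
  obtain ⟨o⟩ := hG.nonempty
  obtain ⟨φ, hφ⟩ := hr.exists_grounded o
  have hψ' : η ⬝ᵥ ψ = η ⬝ᵥ ∑ j, η j • φ j := by
    have h := hG.sub_eq_sub_of_lapMatrix_mulVec_eq
      (hψ.trans (lapMatrix_mulVec_sum_smul_grounded hφ hη).symm)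
    have hconst : ψ - ∑ j, η j • φ j = fun _ => ψ o - (∑ j, η j • φ j) o := by
      ext i
      have := h i o
      simp only [Pi.sub_apply] at this ⊢
      linarith
    rw [← sub_eq_zero, ← dotProduct_sub, hconst]
    simp [dotProduct, ← sum_mul, hη]
  have hii : ∑ i, ∑ j, η i * η j * φ i i = (∑ i, η i * φ i i) * ∑ j, η j := by
    rw [sum_mul_sum]
    exact sum_congr rfl fun i _ => sum_congr rfl fun j _ => by ring
  have hjj : ∑ i, ∑ j, η i * η j * φ j j = (∑ i, η i) * ∑ j, η j * φ j j := by
    rw [sum_mul_sum]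
    exact sum_congr rfl fun i _ => sum_congr rfl fun j _ => by ring
  have hswap : ∑ i, ∑ j, η i * η j * φ i j = ∑ i, ∑ j, η i * η j * φ j i := by
    rw [sum_comm]
    simp only [mul_comm (η _) (η _)]
  calc η ⬝ᵥ ψ = ∑ i, ∑ j, η i * η j * φ j i := by
        rw [hψ']
        simp [dotProduct, Finset.sum_apply, mul_sum, mul_assoc]
    _ = -(∑ i, ∑ j, η i * η j * r i j) / 2 := by
        simp_rw [hr.eq_grounded hφ hG, mul_sub, sum_sub_distrib, hii, hjj, hswap, hη]
        ring
    _ = -(η ⬝ᵥ of r *ᵥ η) / 2 := by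
        simp [dotProduct, mulVec, mul_sum, mul_comm, mul_left_comm]

theorem trace_mul_adjMatrix : trace (of r * G.adjMatrix ℝ) = 2 * (Fintype.card V - 1) := by
  obtain ⟨o⟩ := hG.nonempty
  obtain ⟨φ, hφ⟩ := hr.exists_grounded o
  have hrows : ∑ i, ∑ j, G.adjMatrix ℝ i j * (φ i i - φ i j) = Fintype.card V - 1 := by
    simp_rw [← lapMatrix_mulVec_apply_eq_sum_adjMatrix, hφ]
    simp [Pi.single_apply, sum_sub_distrib]
  have hsplit : ∀ i j, r i j * G.adjMatrix ℝ j i =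
      G.adjMatrix ℝ i j * (φ i i - φ i j) + G.adjMatrix ℝ j i * (φ j j - φ j i) := by
    intro i j
    rw [hr.eq_grounded hφ hG]
    simp only [adjMatrix_apply, G.adj_comm j i]
    ring
  simp only [trace, Matrix.diag, mul_apply, of_apply, hsplit, sum_add_distrib]
  rw [sum_comm (f := fun i j => G.adjMatrix ℝ j i * (φ j j - φ j i)), hrows]
  ring

end IsEffRes

section KirchhoffIndex

variable [Fintype V] (G : SimpleGraph V) [DecidableRel G.Adj] {r : V → V → ℝ}

def degreeVec : V → ℝ := fun v => G.degree v

lemma addKirchhoff_eq_dotProduct :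
    addKirchhoff G r = (degreeVec G ⬝ᵥ of r *ᵥ 1 + 1 ⬝ᵥ of r *ᵥ degreeVec G) / 2 := by
  simp only [addKirchhoff, degreeVec, dotProduct, mulVec, of_apply, add_mul, sum_add_distrib,
    mul_sum, Pi.one_apply, one_mul, mul_one]
  simp only [mul_comm]

lemma mulKirchhoff_eq_dotProduct :
    mulKirchhoff G r = degreeVec G ⬝ᵥ of r *ᵥ degreeVec G / 2 := by
  simp only [mulKirchhoff, degreeVec, dotProduct, mulVec, of_apply, mul_sum]
  simp only [mul_comm, mul_left_comm]

lemma addKirchhoff_eq_of_eq_kernel {M : Matrix V V ℝ}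
    (h : ∀ i j, r i j = M i i + M j j - M i j - M j i) :
    addKirchhoff G r = Fintype.card V * (degreeVec G ⬝ᵥ diag M)
      + (∑ i, degreeVec G i) * trace M - (degreeVec G ⬝ᵥ M *ᵥ 1 + 1 ⬝ᵥ M *ᵥ degreeVec G) := by
  have hrows : of r *ᵥ 1 = (Fintype.card V : ℝ) • diag M + trace M • 1 - M *ᵥ 1 - Mᵀ *ᵥ 1 := by
    ext i
    simp [mulVec, dotProduct, h, sum_add_distrib, sum_sub_distrib, trace]
  have hsymm : 1 ⬝ᵥ of r *ᵥ degreeVec G = degreeVec G ⬝ᵥ of r *ᵥ 1 := by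
    rw [dotProduct_mulVec, dotProduct_comm, ← mulVec_transpose]
    congr 2
    ext i j
    simp only [transpose_apply, of_apply, h]
    ring
  have htranspose : degreeVec G ⬝ᵥ Mᵀ *ᵥ 1 = 1 ⬝ᵥ M *ᵥ degreeVec G := by
    rw [mulVec_transpose, dotProduct_comm, dotProduct_mulVec]
  rw [addKirchhoff_eq_dotProduct, hsymm, hrows]
  simp only [dotProduct_sub, dotProduct_add, dotProduct_smul, htranspose, smul_eq_mul,
    dotProduct_one]
  ring

end KirchhoffIndex

section Subdivision

open Sum

section Connectivity

variable {G : SimpleGraph V} {q : ℕ}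

lemma qSubdivision_connected (hG : G.Connected) (hq : 0 < q) : (qSubdivision G q).Connected := by
  have hV : ∀ u v, (qSubdivision G q).Reachable (inl u) (inl v) := by
    intro u v
    obtain ⟨w⟩ := hG.preconnected u v
    induction w with
    | nil => rfl
    | @cons a b _ hab _ ih =>
      let p : G.edgeSet × Fin q := (⟨s(a, b), hab⟩, ⟨0, hq⟩)
      have ha : (qSubdivision G q).Adj (inl a) (inr p) := Sym2.mem_mk_left a b
      have hb : (qSubdivision G q).Adj (inr p) (inl b) := Sym2.mem_mk_right a b
      exact ha.reachable.trans (hb.reachable.trans ih)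
  have hE : ∀ x, ∃ u, (qSubdivision G q).Reachable (inl u) x := by
    rintro (u | ⟨⟨e, he⟩, k⟩)
    · exact ⟨u, .rfl⟩
    · induction e using Sym2.ind with
      | _ a b => exact ⟨a, Adj.reachable (Sym2.mem_mk_left a b)⟩
  obtain ⟨o⟩ := hG.nonempty
  refine (connected_iff _).2 ⟨fun x y => ?_, ⟨inl o⟩⟩
  obtain ⟨u, hu⟩ := hE x
  obtain ⟨v, hv⟩ := hE y
  exact hu.symm.trans ((hV u v).trans hv)

end Connectivity

section HalfIndicator

variable [Fintype V] [DecidableEq V] {G : SimpleGraph V} {q : ℕ}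

variable (G q) in
noncomputable def qHalfIndicator : Matrix (V ⊕ (G.edgeSet × Fin q)) (V ⊕ (G.edgeSet × Fin q)) ℝ :=
  fromBlocks 0 0 0 ((2 : ℝ)⁻¹ • 1)

lemma qHalfIndicator_mulVec (a : V → ℝ) (b : G.edgeSet × Fin q → ℝ) :
    qHalfIndicator G q *ᵥ (a ⊕ᵥ b) = (0 : V → ℝ) ⊕ᵥ (2 : ℝ)⁻¹ • b := by
  simp [qHalfIndicator, fromBlocks_mulVec, smul_mulVec]

end HalfIndicator

variable [DecidableEq V] {G : SimpleGraph V} [DecidableRel G.Adj] {q : ℕ}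

variable (G q) in
def qIncMatrix : Matrix V (G.edgeSet × Fin q) ℝ := of fun u p => G.incMatrix ℝ u p.1

lemma qIncMatrix_apply (u : V) (p : G.edgeSet × Fin q) :
    qIncMatrix G q u p = if u ∈ (p.1 : Sym2 V) then 1 else 0 := by
  simp [qIncMatrix, incMatrix_apply', incidenceSet]

lemma adjMatrix_qSubdivision :
    (qSubdivision G q).adjMatrix ℝ = fromBlocks 0 (qIncMatrix G q) (qIncMatrix G q)ᵀ 0 := by
  ext (u | p) (v | p') <;> simp only [adjMatrix_apply] <;>
    simp [qSubdivision, qSubAdj, qIncMatrix_apply] <;> congr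

variable [Fintype V]

lemma sum_edgeSet_incMatrix_mul (u : V) (f : Sym2 V → ℝ) :
    ∑ e : G.edgeSet, G.incMatrix ℝ u e * f e = ∑ e, G.incMatrix ℝ u e * f e := by
  rw [sum_set_coe (f := fun e => G.incMatrix ℝ u e * f e)]
  refine sum_subset (subset_univ _) fun e _ he => ?_
  rw [G.incMatrix_of_notMem_incidenceSet fun h => he (Set.mem_toFinset.2 h.1), zero_mul]

lemma sum_edgeSet_prod_incMatrix_mul (u : V) (f : Sym2 V → ℝ) :
    ∑ p : G.edgeSet × Fin q, G.incMatrix ℝ u p.1 * f p.1 = q * ∑ e, G.incMatrix ℝ u e * f e := by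
  simp only [Fintype.sum_prod_type, sum_const, card_univ, Fintype.card_fin, nsmul_eq_mul]
  rw [← mul_sum, sum_edgeSet_incMatrix_mul]

lemma qIncMatrix_mulVec_one : qIncMatrix G q *ᵥ 1 = (q : ℝ) • degreeVec G := by
  ext u
  have h := sum_edgeSet_prod_incMatrix_mul (G := G) (q := q) u 1
  simp only [Pi.one_apply, mul_one] at h
  simp only [mulVec, dotProduct, Pi.one_apply, mul_one, qIncMatrix, of_apply, h,
    sum_incMatrix_apply, degreeVec, Pi.smul_apply, smul_eq_mul]

lemma qIncMatrix_transpose_mulVec_one : (qIncMatrix G q)ᵀ *ᵥ 1 = 2 := by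
  ext p
  simpa [mulVec, dotProduct, qIncMatrix] using G.sum_incMatrix_apply_of_mem_edgeSet p.1.2

lemma qIncMatrix_mul_transpose :
    qIncMatrix G q * (qIncMatrix G q)ᵀ = (q : ℝ) • (G.degMatrix ℝ + G.adjMatrix ℝ) := by
  ext u v
  have h := congrFun₂ (G.incMatrix_mul_transpose (R := ℝ)) u v
  simp only [mul_apply, transpose_apply, qIncMatrix, of_apply] at h ⊢
  rw [sum_edgeSet_prod_incMatrix_mul (f := fun e => G.incMatrix ℝ v e), h]
  by_cases huv : u = v
  · subst huv; simp [degMatrix]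
  · simp [degMatrix, huv, adjMatrix_apply]

lemma degreeVec_qSubdivision :
    degreeVec (qSubdivision G q) = (q : ℝ) • degreeVec G ⊕ᵥ 2 := by
  ext x
  have h := (adjMatrix_mulVec_const_apply (G := qSubdivision G q) (a := (1 : ℝ)) (v := x)).symm
  rw [mul_one] at h
  rw [degreeVec, h, adjMatrix_qSubdivision]
  rcases x with u | p
  · simpa [fromBlocks_mulVec] using congrFun qIncMatrix_mulVec_one u
  · simpa [fromBlocks_mulVec] using congrFun qIncMatrix_transpose_mulVec_one p

lemma sum_degreeVec_qSubdivision :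
    ∑ x, degreeVec (qSubdivision G q) x = 4 * #G.edgeFinset * q := by
  have h : ∑ v, degreeVec G v = 2 * #G.edgeFinset := by
    simp only [degreeVec]
    -- the two `Fintype G.edgeSet` instances in scope agree
    exact_mod_cast G.sum_degrees_eq_twice_card_edges.trans (by congr; exact Subsingleton.elim _ _)
  rw [degreeVec_qSubdivision, Fintype.sum_sum_type]
  simp only [elim_inl, elim_inr, Pi.smul_apply, smul_eq_mul, ← mul_sum, h, Pi.ofNat_apply,
    sum_const, card_univ, Fintype.card_prod, Fintype.card_fin, edgeFinset_card, nsmul_eq_mul]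
  push_cast
  ring

lemma lapMatrix_qSubdivision :
    (qSubdivision G q).lapMatrix ℝ =
      fromBlocks ((q : ℝ) • G.degMatrix ℝ) (-qIncMatrix G q) (-(qIncMatrix G q)ᵀ)
        ((2 : ℝ) • 1) := by
  rw [lapMatrix, adjMatrix_qSubdivision, show (qSubdivision G q).degMatrix ℝ =
    diagonal (degreeVec (qSubdivision G q)) from rfl, degreeVec_qSubdivision, ← fromBlocks_diagonal]
  ext (u | p) (v | p') <;> simp [degMatrix, diagonal_apply, degreeVec, one_apply]

variable (G q) in
noncomputable def qShadow : Matrix (V ⊕ (G.edgeSet × Fin q)) V ℝ :=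
  fromRows 1 ((2 : ℝ)⁻¹ • (qIncMatrix G q)ᵀ)

lemma lapMatrix_qSubdivision_mul_qShadow :
    (qSubdivision G q).lapMatrix ℝ * qShadow G q = fromRows (((q : ℝ) / 2) • G.lapMatrix ℝ) 0 := by
  rw [lapMatrix_qSubdivision, qShadow, fromBlocks_mul_fromRows]
  congr 1
  · simp only [Matrix.mul_one, Matrix.mul_smul, Matrix.neg_mul, qIncMatrix_mul_transpose, lapMatrix]
    module
  · simp [smul_smul]

lemma lapMatrix_qSubdivision_mul_qHalfIndicator :
    (qSubdivision G q).lapMatrix ℝ * qHalfIndicator G q +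
      fromRows (1 : Matrix V V ℝ) 0 * (qShadow G q)ᵀ = 1 := by
  rw [lapMatrix_qSubdivision, qHalfIndicator, qShadow, fromBlocks_multiply, transpose_fromRows,
    fromRows_mul_fromCols, fromBlocks_add, ← fromBlocks_one]
  simp [smul_smul]

lemma qShadow_mulVec_one : qShadow G q *ᵥ 1 = 1 := by
  ext (u | p)
  · simp [qShadow, fromRows_mulVec]
  · have := congrFun (qIncMatrix_transpose_mulVec_one (G := G) (q := q)) p
    simp_all [qShadow, fromRows_mulVec, smul_mulVec]

lemma qShadow_transpose_mulVec (a : V → ℝ) (b : G.edgeSet × Fin q → ℝ) :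
    (qShadow G q)ᵀ *ᵥ (a ⊕ᵥ b) = a + (2 : ℝ)⁻¹ • (qIncMatrix G q *ᵥ b) := by
  simp [qShadow, transpose_fromRows, fromCols_mulVec, transpose_smul, smul_mulVec]

lemma qShadow_transpose_mulVec_degreeVec :
    (qShadow G q)ᵀ *ᵥ degreeVec (qSubdivision G q) = (2 * q : ℝ) • degreeVec G := by
  rw [degreeVec_qSubdivision, qShadow_transpose_mulVec, show (2 : G.edgeSet × Fin q → ℝ) =
    (2 : ℝ) • 1 by ext; simp, mulVec_smul, qIncMatrix_mulVec_one, smul_smul, smul_smul, ← add_smul]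
  ring_nf

lemma qShadow_transpose_mulVec_one :
    (qShadow G q)ᵀ *ᵥ 1 = 1 + ((q : ℝ) / 2) • degreeVec G := by
  rw [← elim_one_one, qShadow_transpose_mulVec, qIncMatrix_mulVec_one, smul_smul]
  ring_nf

lemma lapMatrix_qSubdivision_mulVec_lift (hq : q ≠ 0) {ψ : V → ℝ}
    {w : V ⊕ (G.edgeSet × Fin q) → ℝ} (hψ : G.lapMatrix ℝ *ᵥ ψ = (qShadow G q)ᵀ *ᵥ w) :
    (qSubdivision G q).lapMatrix ℝ *ᵥ ((2 / q : ℝ) • qShadow G q *ᵥ ψ + qHalfIndicator G q *ᵥ w)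
      = w := by
  rw [mulVec_add, mulVec_smul, mulVec_mulVec, mulVec_mulVec, lapMatrix_qSubdivision_mul_qShadow,
    eq_sub_of_add_eq lapMatrix_qSubdivision_mul_qHalfIndicator, sub_mulVec, one_mulVec,
    fromRows_mulVec, ← mulVec_mulVec, fromRows_mulVec, smul_mulVec, hψ]
  ext (u | p) <;> simp [field]

end Subdivision

section SubdivisionResistance

open Sum

variable [Fintype V] [DecidableEq V] {G : SimpleGraph V} [DecidableRel G.Adj] {q : ℕ}
  {r : V → V → ℝ}

variable (G q r) in
noncomputable def qKernel : Matrix (V ⊕ (G.edgeSet × Fin q)) (V ⊕ (G.edgeSet × Fin q)) ℝ :=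
  qHalfIndicator G q - (q : ℝ)⁻¹ • (qShadow G q * of r * (qShadow G q)ᵀ)

theorem IsEffRes.qSubdivision_eq_qKernel (hr : IsEffRes G r) (hG : G.Connected) (hq : 0 < q)
    {r' : V ⊕ (G.edgeSet × Fin q) → V ⊕ (G.edgeSet × Fin q) → ℝ}
    (hr' : IsEffRes (qSubdivision G q) r') (x y : V ⊕ (G.edgeSet × Fin q)) :
    r' x y = qKernel G q r x x + qKernel G q r y y - qKernel G q r x y - qKernel G q r y x := by
  set S := qShadow G q
  set w : V ⊕ (G.edgeSet × Fin q) → ℝ := Pi.single x 1 - Pi.single y 1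
  have hw : ∑ i, (Sᵀ *ᵥ w) i = 0 := by
    rw [← dotProduct_one, mulVec_transpose, ← dotProduct_mulVec, qShadow_mulVec_one,
      dotProduct_one]
    simp [w]
  obtain ⟨ψ, hψ⟩ := hr.exists_lapMatrix_mulVec_eq hG hw
  rw [hr'.eq_sub_of_lapMatrix_mulVec_eq (qSubdivision_connected hG hq)
    (lapMatrix_qSubdivision_mulVec_lift hq.ne' hψ), ← single_sub_single_dotProduct_mulVec]
  have hsub : ∀ Φ : V ⊕ (G.edgeSet × Fin q) → ℝ, Φ x - Φ y = w ⬝ᵥ Φ := fun Φ => by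
    simp [w, sub_dotProduct]
  rw [hsub, qKernel, sub_mulVec, dotProduct_sub, smul_mulVec, dotProduct_smul,
    dotProduct_mul_mul_transpose_mulVec, dotProduct_add, dotProduct_smul, dotProduct_mulVec,
    ← mulVec_transpose, hr.dotProduct_eq_of_lapMatrix_mulVec_eq hG hw hψ, smul_eq_mul, smul_eq_mul]
  ring

lemma diag_qKernel (hr : IsEffRes G r) :
    diag (qKernel G q r) = (0 : V → ℝ) ⊕ᵥ fun p =>
      2⁻¹ - (4 * q : ℝ)⁻¹ * ((qIncMatrix G q)ᵀ * of r * qIncMatrix G q) p p := by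
  ext (u | p)
  · simp [qKernel, qHalfIndicator, qShadow, transpose_fromRows, fromRows_mul, hr.apply_self]
  · simp [qKernel, qHalfIndicator, qShadow, transpose_fromRows, fromRows_mul]
    ring

lemma IsEffRes.trace_qIncMatrix (hr : IsEffRes G r) (hG : G.Connected) :
    trace ((qIncMatrix G q)ᵀ * of r * qIncMatrix G q) = 2 * q * (Fintype.card V - 1) := by
  rw [trace_mul_cycle, qIncMatrix_mul_transpose, smul_mul, Matrix.add_mul, trace_smul, trace_add,
    trace_mul_comm (G.adjMatrix ℝ), hr.trace_mul_adjMatrix hG]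
  simp [degMatrix, trace, hr.apply_self]
  ring

lemma degreeVec_dotProduct_qKernel_mulVec_add (hq : q ≠ 0) :
    degreeVec (qSubdivision G q) ⬝ᵥ qKernel G q r *ᵥ 1 +
        1 ⬝ᵥ qKernel G q r *ᵥ degreeVec (qSubdivision G q) =
      2 * #G.edgeFinset * q - 4 * addKirchhoff G r - 4 * q * mulKirchhoff G r := by
  have hhalf : degreeVec (qSubdivision G q) ⬝ᵥ qHalfIndicator G q *ᵥ 1 = #G.edgeFinset * q := by
    rw [← elim_one_one, qHalfIndicator_mulVec, degreeVec_qSubdivision, sumElim_dotProduct_sumElim]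
    simp [dotProduct, edgeFinset_card]
  have hhalf' : 1 ⬝ᵥ qHalfIndicator G q *ᵥ degreeVec (qSubdivision G q) = #G.edgeFinset * q := by
    rw [degreeVec_qSubdivision, qHalfIndicator_mulVec, ← elim_one_one, sumElim_dotProduct_sumElim]
    simp [dotProduct, edgeFinset_card]
  rw [qKernel, sub_mulVec, sub_mulVec, dotProduct_sub, dotProduct_sub, smul_mulVec, smul_mulVec,
    dotProduct_smul, dotProduct_smul, dotProduct_mul_mul_transpose_mulVec,
    dotProduct_mul_mul_transpose_mulVec, qShadow_transpose_mulVec_degreeVec,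
    qShadow_transpose_mulVec_one, hhalf, hhalf', addKirchhoff_eq_dotProduct,
    mulKirchhoff_eq_dotProduct]
  simp only [mulVec_add, mulVec_smul, dotProduct_add, add_dotProduct, dotProduct_smul,
    smul_dotProduct, smul_eq_mul]
  field_simp
  ring

variable (hr : IsEffRes G r) (hG : G.Connected) (hq : 0 < q)
include hr hG hq

lemma degreeVec_qSubdivision_dotProduct_diag_qKernel :
    degreeVec (qSubdivision G q) ⬝ᵥ diag (qKernel G q r) =
      #G.edgeFinset * q - (Fintype.card V - 1) := by
  have h : ∑ p, ((qIncMatrix G q)ᵀ * of r * qIncMatrix G q) p p = _ := hr.trace_qIncMatrix hG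
  rw [degreeVec_qSubdivision, diag_qKernel hr, sumElim_dotProduct_sumElim]
  simp only [dotProduct, mul_zero, sum_const_zero, zero_add, Pi.ofNat_apply,
    mul_sub, sum_sub_distrib, ← mul_sum, h, sum_const, card_univ, Fintype.card_prod,
    Fintype.card_fin, edgeFinset_card, nsmul_eq_mul]
  field_simp
  push_cast
  ring

lemma trace_qKernel :
    trace (qKernel G q r) = (#G.edgeFinset * q - (Fintype.card V - 1)) / 2 := by
  have h : ∑ p, ((qIncMatrix G q)ᵀ * of r * qIncMatrix G q) p p = _ := hr.trace_qIncMatrix hG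
  rw [trace, diag_qKernel hr, Fintype.sum_sum_type]
  simp only [elim_inl, elim_inr, Pi.zero_apply, sum_const_zero, zero_add, sum_sub_distrib,
    ← mul_sum, h, sum_const, card_univ, Fintype.card_prod, Fintype.card_fin, edgeFinset_card,
    nsmul_eq_mul]
  field_simp
  push_cast
  ring

end SubdivisionResistance

/-- `K̄(S_q(G)) = 4K̄(G) + 4q K̃(G) + mq(3mq - 2n + 1) - n(n-1)`. -/
theorem stmt17 [Fintype V] [DecidableEq V] (G : SimpleGraph V) [DecidableRel G.Adj]
    (hconn : G.Connected) (q : ℕ) (hq : 0 < q)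
    (r : V → V → ℝ) (r' : (V ⊕ (G.edgeSet × Fin q)) → (V ⊕ (G.edgeSet × Fin q)) → ℝ)
    (hr : IsEffRes G r) (hr' : IsEffRes (qSubdivision G q) r') :
    addKirchhoff (qSubdivision G q) r' =
      4 * addKirchhoff G r + 4 * q * mulKirchhoff G r +
        (G.edgeFinset.card : ℝ) * q *
          (3 * (G.edgeFinset.card : ℝ) * q - 2 * (Fintype.card V : ℝ) + 1) -
        (Fintype.card V : ℝ) * ((Fintype.card V : ℝ) - 1) := by
  rw [addKirchhoff_eq_of_eq_kernel _ (hr.qSubdivision_eq_qKernel hconn hq hr'),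
    degreeVec_qSubdivision_dotProduct_diag_qKernel hr hconn hq, trace_qKernel hr hconn hq,
    degreeVec_dotProduct_qKernel_mulVec_add hq.ne', sum_degreeVec_qSubdivision,
    Fintype.card_sum, Fintype.card_prod, Fintype.card_fin, ← edgeFinset_card]
  push_cast
  ring
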